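/- Let ρ be a positive definite quantum state on ℂ^{d_A} ⊗ ℂ^{d_B}, let Φ_A(X) := Σ_a (E_aa ⊗ 1_{d_B}) X (E_aa ⊗ 1_{d_B}) be the local measurement in the standard basis of the first factor, and let Φ^loc(Y) := Σ_a E_aa Y E_aa act on ℂ^{d_A}. Writing ρ_A := Tr_B ρ, ρ_B := Tr_A ρ, and I(A:B)_τ := S(Tr_B τ) + S(Tr_A τ) − S(τ) for a bipartite state τ, the irrealism decomposes as local coherence plus discord: S(Φ_A(ρ)) − S(ρ) = [S(Φ^loc(ρ_A)) − S(ρ_A)] + [I(A:B)_ρ − I(A:B)_{Φ_A(ρ)}]. -/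

import Mathlib

open Matrix Kronecker
open scoped ComplexOrder

noncomputable section

variable {n : Type*} [Fintype n] [DecidableEq n]

/-- `|X| = (X† X)^{1/2}`, the positive semidefinite absolute value of a matrix. -/
def matAbs (X : Matrix n n ℂ) : Matrix n n ℂ :=
  (Matrix.posSemidef_conjTranspose_mul_self X).1.eigenvectorUnitary.1 *
    Matrix.diagonal ((↑) ∘ (fun x : ℝ => √x) ∘ (Matrix.posSemidef_conjTranspose_mul_self X).1.eigenvalues) *
    (star (Matrix.posSemidef_conjTranspose_mul_self X).1.eigenvectorUnitary : Matrix n n ℂ)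

/-- `Tr |X|^p`, with the `p`-th power taken through the functional calculus. -/
def traceAbsPow (p : ℝ) (X : Matrix n n ℂ) : ℝ :=
  (Matrix.trace (cfc (fun x : ℝ => x ^ p) (matAbs X))).re

/-- The Schatten `p`-norm `‖X‖_p = (Tr |X|^p)^(1/p)`. -/
def schatten (p : ℝ) (X : Matrix n n ℂ) : ℝ :=
  (traceAbsPow p X) ^ (1 / p)

/-- Matrix square root via the functional calculus (agrees with the positive semidefinite
square root on positive semidefinite matrices). -/
def msqrt (X : Matrix n n ℂ) : Matrix n n ℂ := cfc Real.sqrt X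

/-- Matrix natural logarithm via the functional calculus. -/
def mlog (X : Matrix n n ℂ) : Matrix n n ℂ := cfc Real.log X

/-- Von Neumann entropy `S(ρ) = -Tr(ρ log ρ)`. -/
def vnEntropy (ρ : Matrix n n ℂ) : ℝ := -(Matrix.trace (ρ * mlog ρ)).re

/-- Relative entropy `S(ρ‖σ) = Tr(ρ log ρ) - Tr(ρ log σ)`. -/
def relEnt (ρ σ : Matrix n n ℂ) : ℝ :=
  (Matrix.trace (ρ * mlog ρ)).re - (Matrix.trace (ρ * mlog σ)).re

/-- Uhlmann fidelity `F(ρ,σ) = (Tr|√σ √ρ|)²`. -/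
def fidelity (ρ σ : Matrix n n ℂ) : ℝ :=
  ((Matrix.trace (matAbs (msqrt σ * msqrt ρ))).re) ^ 2

/-- Partial trace over the second factor. -/
def ptraceE {S E : Type*} [Fintype E] (Ω : Matrix (S × E) (S × E) ℂ) : Matrix S S ℂ :=
  Matrix.of fun s s' => ∑ e, Ω (s, e) (s', e)

/-- Partial trace over the first factor. -/
def ptraceS {S E : Type*} [Fintype S] (Ω : Matrix (S × E) (S × E) ℂ) : Matrix E E ℂ :=
  Matrix.of fun e e' => ∑ s, Ω (s, e) (s, e')

/-- The local measurement `Φ_A` in the standard basis of the first tensor factor. -/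
def measA (dA dB : ℕ) (X : Matrix (Fin dA × Fin dB) (Fin dA × Fin dB) ℂ) :
    Matrix (Fin dA × Fin dB) (Fin dA × Fin dB) ℂ :=
  ∑ a : Fin dA,
    (Matrix.single a a (1 : ℂ) ⊗ₖ (1 : Matrix (Fin dB) (Fin dB) ℂ)) * X *
      (Matrix.single a a (1 : ℂ) ⊗ₖ (1 : Matrix (Fin dB) (Fin dB) ℂ))

/-- The measurement `Φ^loc` in the standard basis, acting on the first factor alone. -/
def measLoc (dA : ℕ) (Y : Matrix (Fin dA) (Fin dA) ℂ) : Matrix (Fin dA) (Fin dA) ℂ :=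
  ∑ a : Fin dA,
    Matrix.single a a (1 : ℂ) * Y * Matrix.single a a (1 : ℂ)

/-- Quantum mutual information `I(A:B)_τ = S(Tr_B τ) + S(Tr_A τ) - S(τ)`. -/
def mutInfo {A B : Type*} [Fintype A] [Fintype B] [DecidableEq A] [DecidableEq B]
    (τ : Matrix (A × B) (A × B) ℂ) : ℝ :=
  vnEntropy (ptraceE τ) + vnEntropy (ptraceS τ) - vnEntropy τ

/-! The measurement `Φ_A` satisfies `Tr_B ∘ Φ_A = Φ^loc ∘ Tr_B` and `Tr_A ∘ Φ_A = Tr_A`,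
so after expanding both mutual informations every entropy term cancels. -/

lemma measLoc_eq_diagonal (dA : ℕ) (Y : Matrix (Fin dA) (Fin dA) ℂ) :
    measLoc dA Y = diagonal fun a => Y a a := by
  simp only [measLoc, single_mul_mul_single, one_mul, mul_one]
  exact sum_single_eq_diagonal _

lemma measA_apply (dA dB : ℕ) (X : Matrix (Fin dA × Fin dB) (Fin dA × Fin dB) ℂ)
    (s s' : Fin dA) (e e' : Fin dB) :
    measA dA dB X (s, e) (s', e') = if s = s' then X (s, e) (s', e') else 0 := by
  have hproj (a : Fin dA) : single a a (1 : ℂ) ⊗ₖ (1 : Matrix (Fin dB) (Fin dB) ℂ)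
      = diagonal fun p => (Pi.single a 1 : Fin dA → ℂ) p.1 := by
    rw [← diagonal_single, ← diagonal_one, diagonal_kronecker_diagonal]
    simp only [mul_one]
  simp only [measA, hproj, Matrix.sum_apply, diagonal_mul, mul_diagonal, Pi.single_apply]
  split_ifs with h
  · subst h; simp
  · simp [h]

lemma ptraceE_measA (dA dB : ℕ) (X : Matrix (Fin dA × Fin dB) (Fin dA × Fin dB) ℂ) :
    ptraceE (measA dA dB X) = measLoc dA (ptraceE X) := by
  ext s s'
  simp only [ptraceE, measLoc_eq_diagonal, of_apply, measA_apply, diagonal_apply]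
  split_ifs <;> simp_all

lemma ptraceS_measA (dA dB : ℕ) (X : Matrix (Fin dA × Fin dB) (Fin dA × Fin dB) ℂ) :
    ptraceS (measA dA dB X) = ptraceS X := by
  ext e e'
  simp [ptraceS, measA_apply]

theorem irrealism_eq_coherence_add_discord_general
    (dA dB : ℕ) (ρ : Matrix (Fin dA × Fin dB) (Fin dA × Fin dB) ℂ) :
    vnEntropy (measA dA dB ρ) - vnEntropy ρ
      = (vnEntropy (measLoc dA (ptraceE ρ)) - vnEntropy (ptraceE ρ))
        + (mutInfo ρ - mutInfo (measA dA dB ρ)) := by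
  rw [mutInfo, mutInfo, ptraceE_measA, ptraceS_measA]
  ring

/-- Irrealism decomposes as local coherence plus discord:
`S(Φ_A(ρ)) - S(ρ) = [S(Φ^loc(ρ_A)) - S(ρ_A)] + [I(A:B)_ρ - I(A:B)_{Φ_A(ρ)}]`. -/
theorem irrealism_eq_coherence_add_discord
    (dA dB : ℕ) (ρ : Matrix (Fin dA × Fin dB) (Fin dA × Fin dB) ℂ)
    (hρ : ρ.PosDef) (htr : ρ.trace = 1) :
    vnEntropy (measA dA dB ρ) - vnEntropy ρ
      = (vnEntropy (measLoc dA (ptraceE ρ)) - vnEntropy (ptraceE ρ))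
        + (mutInfo ρ - mutInfo (measA dA dB ρ)) :=
  irrealism_eq_coherence_add_discord_general dA dB ρ
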